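/- arXiv:2511.07550 — 2 statements merged into one kernel-verified Lean document; each statement's English description precedes it below -/
import Mathlib

section
/- Let s ≥ 6 and let a, b be integers with a odd. If the Kloosterman sum S(a,b; 2^s) = ∑*_{x mod 2^s} e((ax + b·x̄)/2^s) (sum over odd x, with x̄ the inverse of x modulo 2^s) is nonzero, then a ≡ b (mod 8). -/
open scoped BigOperators
open Finset

/-- `e_q(x) = exp(2πi x/q)` for `x : ZMod q`. -/
noncomputable def eZMod (q : ℕ) (x : ZMod q) : ℂ :=
  Complex.exp (2 * Real.pi * Complex.I * (x.val : ℂ) / q)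

/-- The (unnormalized) Kloosterman sum `S(a,b;q) = ∑*_{x mod q} e_q(ax + b x̄)`. -/
noncomputable def klS (a b : ℤ) (q : ℕ) : ℂ :=
  ∑ x ∈ (Finset.range q).filter (fun x => Nat.Coprime x q),
    eZMod q ((a : ZMod q) * (x : ZMod q) + (b : ZMod q) * (x : ZMod q)⁻¹)

/-!
Translating the summation variable by `c = 2^(s-3)` preserves the odd residues modulo `2^s`. As
`c² = 0` for `s ≥ 6`, we get `(x + c)⁻¹ = x⁻¹ - c x⁻²`, and `c x⁻² = c` because odd squares are
`1` modulo `8`. Hence the phase `a x + b x⁻¹` moves by the constant `c (a - b)`, so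
`S(a,b;2^s) = e(c (a - b) / 2^s) · S(a,b;2^s)`; a nonzero sum forces `2^s ∣ 2^(s-3) (a - b)`.
-/

lemma eZMod_eq_stdAddChar {q : ℕ} [NeZero q] (x : ZMod q) : eZMod q x = ZMod.stdAddChar x := by
  rw [ZMod.stdAddChar_apply, ZMod.toCircle_apply, eZMod]

lemma klS_eq_sum_isUnit (a b : ℤ) (q : ℕ) [NeZero q] :
    klS a b q = ∑ x ∈ univ.filter (IsUnit : ZMod q → Prop),
      ZMod.stdAddChar ((a : ZMod q) * x + (b : ZMod q) * x⁻¹) := by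
  refine sum_nbij' (fun x : ℕ => (x : ZMod q)) ZMod.val ?_ ?_ ?_ ?_ ?_
  · intro x hx
    simpa [ZMod.isUnit_iff_coprime] using (mem_filter.1 hx).2
  · intro y hy
    simp only [mem_filter, mem_univ, true_and, mem_range] at hy ⊢
    exact ⟨y.val_lt, (ZMod.isUnit_iff_coprime _ _).1 (by rwa [ZMod.natCast_zmod_val])⟩
  · intro x hx
    exact ZMod.val_cast_of_lt (mem_range.1 (mem_filter.1 hx).1)
  · intro y _
    exact ZMod.natCast_zmod_val y
  · intro x _
    exact eZMod_eq_stdAddChar _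

theorem sum_filter_isUnit_add_of_isNilpotent {R M : Type*} [CommRing R] [Fintype R]
    [DecidablePred (IsUnit : R → Prop)] [AddCommMonoid M] {c : R} (hc : IsNilpotent c)
    (f : R → M) :
    ∑ x ∈ univ.filter IsUnit, f (x + c) = ∑ x ∈ univ.filter IsUnit, f x := by
  have add_mem (d : R) (hd : IsNilpotent d) (x : R) (hx : x ∈ univ.filter IsUnit) :
      x + d ∈ univ.filter IsUnit := by
    simpa using hd.isUnit_add_left_of_commute (mem_filter.1 hx).2 (Commute.all _ _)
  refine sum_nbij' (· + c) (· - c) (add_mem c hc) ?_ (fun x _ => add_sub_cancel_right x c)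
    (fun x _ => sub_add_cancel x c) (fun _ _ => rfl)
  intro x hx
  simpa [sub_eq_add_neg] using add_mem (-c) hc.neg x hx

lemma ZMod.inv_add_of_mul_self_eq_zero {n : ℕ} {x c : ZMod n} (hx : IsUnit x) (hc : c * c = 0) :
    (x + c)⁻¹ = x⁻¹ - c * x⁻¹ ^ 2 := by
  apply ZMod.inv_eq_of_mul_eq_one
  have hxx : x * x⁻¹ = 1 := ZMod.mul_inv_of_unit x hx
  linear_combination (1 - c * x⁻¹) * hxx - x⁻¹ ^ 2 * hc

lemma ZMod.odd_val_of_isUnit {s : ℕ} (hs : s ≠ 0) {u : ZMod (2 ^ s)} (hu : IsUnit u) :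
    Odd u.val := by
  rw [← ZMod.natCast_zmod_val u, ZMod.isUnit_iff_coprime,
    Nat.coprime_pow_right_iff (Nat.pos_of_ne_zero hs)] at hu
  exact Nat.coprime_two_right.1 hu

section TwoPow

variable {s : ℕ}

lemma two_pow_sub_three_mul_intCast_eq_zero_iff (hs : 3 ≤ s) (n : ℤ) :
    (2 : ZMod (2 ^ s)) ^ (s - 3) * n = 0 ↔ 8 ∣ n := by
  have hpow : ((2 ^ s : ℕ) : ℤ) = 2 ^ (s - 3) * 8 := by
    rw [show (8 : ℤ) = 2 ^ 3 by norm_num, ← pow_add, Nat.sub_add_cancel hs]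
    push_cast; rfl
  rw [← mul_dvd_mul_iff_left (pow_ne_zero (s - 3) (two_ne_zero : (2 : ℤ) ≠ 0)), ← hpow,
    ← ZMod.intCast_zmod_eq_zero_iff_dvd]
  push_cast
  rfl

lemma two_pow_sub_three_mul_sq_of_isUnit (hs : 3 ≤ s) {u : ZMod (2 ^ s)} (hu : IsUnit u) :
    (2 : ZMod (2 ^ s)) ^ (s - 3) * u ^ 2 = 2 ^ (s - 3) := by
  have h8 : (8 : ℤ) ∣ (u.val : ℤ) ^ 2 - 1 :=
    Int.eight_dvd_sq_sub_one_of_odd (ZMod.odd_val_of_isUnit (by omega) hu).natCast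
  have := (two_pow_sub_three_mul_intCast_eq_zero_iff hs _).2 h8
  push_cast [ZMod.natCast_zmod_val] at this
  linear_combination this

lemma two_pow_sub_three_mul_self (hs : 6 ≤ s) :
    (2 : ZMod (2 ^ s)) ^ (s - 3) * 2 ^ (s - 3) = 0 := by
  have h8 : (8 : ℤ) ∣ 2 ^ (s - 3) := pow_dvd_pow 2 (by omega : 3 ≤ s - 3)
  simpa using (two_pow_sub_three_mul_intCast_eq_zero_iff (by omega) _).2 h8

lemma kloosterman_phase_add_two_pow (hs : 6 ≤ s) (a b : ZMod (2 ^ s)) {x : ZMod (2 ^ s)}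
    (hx : IsUnit x) :
    a * (x + 2 ^ (s - 3)) + b * (x + 2 ^ (s - 3))⁻¹
      = a * x + b * x⁻¹ + 2 ^ (s - 3) * (a - b) := by
  have hxinv : IsUnit x⁻¹ := .of_mul_eq_one_right x (ZMod.mul_inv_of_unit x hx)
  rw [ZMod.inv_add_of_mul_self_eq_zero hx (two_pow_sub_three_mul_self hs),
    two_pow_sub_three_mul_sq_of_isUnit (by omega) hxinv]
  ring

lemma klS_two_pow_eq_stdAddChar_mul (hs : 6 ≤ s) (a b : ℤ) :
    klS a b (2 ^ s) =
      ZMod.stdAddChar ((2 : ZMod (2 ^ s)) ^ (s - 3) * ((a - b : ℤ) : ZMod (2 ^ s))) *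
        klS a b (2 ^ s) := by
  have hc : IsNilpotent ((2 : ZMod (2 ^ s)) ^ (s - 3)) :=
    ⟨2, by rw [sq]; exact two_pow_sub_three_mul_self hs⟩
  rw [klS_eq_sum_isUnit, mul_sum, ← sum_filter_isUnit_add_of_isNilpotent hc]
  refine sum_congr rfl fun x hx => ?_
  rw [kloosterman_phase_add_two_pow hs _ _ (mem_filter.1 hx).2, AddChar.map_add_eq_mul,
    mul_comm]
  push_cast
  rfl

end TwoPow

theorem stmt_6_general (s : ℕ) (hs : 6 ≤ s) (a b : ℤ)
    (h : klS a b (2 ^ s) ≠ 0) : a ≡ b [ZMOD 8] := by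
  have hphase :
      ZMod.stdAddChar ((2 : ZMod (2 ^ s)) ^ (s - 3) * ((a - b : ℤ) : ZMod (2 ^ s))) = 1 :=
    mul_right_cancel₀ h ((one_mul _).trans (klS_two_pow_eq_stdAddChar_mul hs a b)).symm
  rw [← AddChar.map_zero_eq_one (ZMod.stdAddChar (N := 2 ^ s)), ZMod.injective_stdAddChar.eq_iff,
    two_pow_sub_three_mul_intCast_eq_zero_iff (by omega)] at hphase
  exact Int.modEq_iff_dvd.2 (dvd_sub_comm.1 hphase)

/-- If `s ≥ 6`, `a` odd, and the Kloosterman sum `S(a,b;2^s)` is nonzero,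
then `a ≡ b (mod 8)`. -/
theorem stmt_6 (s : ℕ) (hs : 6 ≤ s) (a b : ℤ) (ha : Odd a)
    (h : klS a b (2 ^ s) ≠ 0) : a ≡ b [ZMOD 8] :=
  stmt_6_general s hs a b h
end

section
/- Let p be an odd prime and b₁,…,b₄ nonzero elements of F_p with b₁+b₂ = b₃+b₄ and b₁^(−1)+b₂^(−1) = b₃^(−1)+b₄^(−1). Then the tuple (b₁², b₂², b₃², b₄²) lies in the variety V^Δ, i.e., for each i ∈ {1,2,3,4}, the number of indices j with b_j² = b_i² is even. -/
/-!
From `b₀ + b₁ = b₂ + b₃ = s` and the equation of reciprocals, cleared of denominators, one gets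
`s · b₂b₃ = s · b₀b₁`. If `s ≠ 0` the pairs `{b₀, b₁}` and `{b₂, b₃}` have the same sum and product,
hence coincide; if `s = 0` both pairs have the form `{x, -x}`. In every case some fixed-point-free
involution of the indices preserves `j ↦ b j ^ 2`, so each fibre of that map has even size.
-/

open Finset Function

-- Summing `1` over `s` in `ZMod 2`, the terms cancel in pairs `{a, g a}`.
theorem Finset.even_card_of_involution {ι : Type*} {s : Finset ι} (g : ι → ι)
    (hg : Involutive g) (hfree : ∀ a ∈ s, g a ≠ a) (hmem : ∀ a ∈ s, g a ∈ s) : Even #s := by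
  rw [← ZMod.natCast_eq_zero_iff_even, card_eq_sum_ones, Nat.cast_sum, Nat.cast_one]
  exact sum_involution (fun a _ => g a) (fun _ _ => by decide) (fun a ha _ => hfree a ha) hmem
    (fun a _ => hg a)

theorem even_card_filter_eq_of_involution {ι α : Type*} [Fintype ι] [DecidableEq α]
    (f : ι → α) (g : ι → ι) (hg : Involutive g) (hfree : ∀ i, g i ≠ i)
    (hf : ∀ i, f (g i) = f i) (x : α) : Even #{j | f j = x} :=
  Finset.even_card_of_involution g hg (fun i _ => hfree i) (fun i hi => by simpa [hf] using hi)

theorem eq_or_eq_or_add_eq_zero_of_add_eq_of_inv_add_inv_eq {F : Type*} [Field F] {a b c d : F}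
    (ha : a ≠ 0) (hb : b ≠ 0) (hc : c ≠ 0) (hd : d ≠ 0)
    (hsum : a + b = c + d) (hinv : a⁻¹ + b⁻¹ = c⁻¹ + d⁻¹) :
    (c = a ∧ d = b) ∨ (c = b ∧ d = a) ∨ (b = -a ∧ d = -c) := by
  by_cases hs : a + b = 0
  · exact Or.inr (Or.inr ⟨by linear_combination hs, by linear_combination hs - hsum⟩)
  have hcross : (a + b) * (c * d) = (a + b) * (a * b) := by
    field_simp at hinv
    linear_combination hinv - (a * b) * hsum
  have hprod : c * d = a * b := mul_left_cancel₀ hs hcross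
  -- `c` is a root of `X² - (a + b) X + ab = (X - a)(X - b)`
  have hroot : (c - a) * (c - b) = 0 := by linear_combination (-c) * hsum - hprod
  rcases mul_eq_zero.mp hroot with h | h
  · exact Or.inl ⟨by linear_combination h, by linear_combination -hsum - h⟩
  · exact Or.inr (Or.inl ⟨by linear_combination h, by linear_combination -hsum - h⟩)

theorem stmt_15_general (p : ℕ) (hp : p.Prime) (b : Fin 4 → ZMod p)
    (hb : ∀ i, b i ≠ 0)
    (hsum : b 0 + b 1 = b 2 + b 3)
    (hinv : (b 0)⁻¹ + (b 1)⁻¹ = (b 2)⁻¹ + (b 3)⁻¹) :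
    ∀ i : Fin 4,
      Even ((Finset.univ.filter (fun j : Fin 4 => b j ^ 2 = b i ^ 2)).card) := by
  have : Fact p.Prime := ⟨hp⟩
  obtain ⟨g, hg, hfree, hgb⟩ : ∃ g : Fin 4 → Fin 4,
      Involutive g ∧ (∀ j, g j ≠ j) ∧ ∀ j, b (g j) ^ 2 = b j ^ 2 := by
    rcases eq_or_eq_or_add_eq_zero_of_add_eq_of_inv_add_inv_eq (hb 0) (hb 1) (hb 2) (hb 3)
      hsum hinv with ⟨h2, h3⟩ | ⟨h2, h3⟩ | ⟨h1, h3⟩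
    · exact ⟨![2, 3, 0, 1], by unfold Involutive; decide, by decide,
        by simp [Fin.forall_fin_succ, h2, h3]⟩
    · exact ⟨![3, 2, 1, 0], by unfold Involutive; decide, by decide,
        by simp [Fin.forall_fin_succ, h2, h3]⟩
    · exact ⟨![1, 0, 3, 2], by unfold Involutive; decide, by decide,
        by simp [Fin.forall_fin_succ, h1, h3]⟩
  exact fun i => even_card_filter_eq_of_involution (b · ^ 2) g hg hfree hgb (b i ^ 2)

/-- Lemma 6.4: for `p` an odd prime and nonzero `b₁,…,b₄ ∈ F_p` with `b₁+b₂ = b₃+b₄` and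
`b₁⁻¹+b₂⁻¹ = b₃⁻¹+b₄⁻¹`, the tuple `(b₁²,…,b₄²)` lies in the diagonal variety `V^Δ`:
for each `i`, the number of `j` with `b_j² = b_i²` is even. -/
theorem stmt_15 (p : ℕ) (hp : p.Prime) (hodd : Odd p) (b : Fin 4 → ZMod p)
    (hb : ∀ i, b i ≠ 0)
    (hsum : b 0 + b 1 = b 2 + b 3)
    (hinv : (b 0)⁻¹ + (b 1)⁻¹ = (b 2)⁻¹ + (b 3)⁻¹) :
    ∀ i : Fin 4,
      Even ((Finset.univ.filter (fun j : Fin 4 => b j ^ 2 = b i ^ 2)).card) :=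
  stmt_15_general p hp b hb hsum hinv
end
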